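/- Let 1 < ν < 2, integers b ≥ a+1, reals α, β, γ, δ ≥ 0 with β ≥ α and ξ > 0, and let q : {a+1, ..., b} → ℝ. If there exists a nontrivial function u : {a, ..., b} → ℝ satisfying u(t) = ∑_{s=a+1}^{b} G(t,s) q(s) u(s) for all t ∈ {a, ..., b}, then ∑_{s=a+1}^{b} |q(s)| > 1/Ω, where Ω = (1/ξ)[αγ H_{ν-1}(b,a)² + αδ H_{ν-1}(b,a) + (β-α)γ H_{ν-1}(b,a) + (β-α)δ]. -/

import Mathlib

noncomputable def H (μ : ℝ) (t a : ℤ) : ℝ :=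
  Real.Gamma ((t : ℝ) - a + μ) / (Real.Gamma ((t : ℝ) - a) * Real.Gamma (μ + 1))

noncomputable def xiBVP (ν : ℝ) (a b : ℤ) (α β γ δ : ℝ) : ℝ :=
  (β - α) * γ + α * γ * H (ν - 1) b a + α * δ * H (ν - 2) b a

noncomputable def uG (ν : ℝ) (a b : ℤ) (α β γ δ : ℝ) (t s : ℤ) : ℝ :=
  (1 / xiBVP ν a b α β γ δ) *
    (α * γ * H (ν - 1) t a * H (ν - 1) b (s - 1)
      + α * δ * H (ν - 1) t a * H (ν - 2) b (s - 1)
      + (β - α) * γ * H (ν - 1) b (s - 1)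
      + (β - α) * δ * H (ν - 2) b (s - 1))

noncomputable def vG (ν : ℝ) (a b : ℤ) (α β γ δ : ℝ) (t s : ℤ) : ℝ :=
  uG ν a b α β γ δ t s - H (ν - 1) t (s - 1)

noncomputable def GG (ν : ℝ) (a b : ℤ) (α β γ δ : ℝ) (t s : ℤ) : ℝ :=
  if t ≤ s - 1 then uG ν a b α β γ δ t s else vG ν a b α β γ δ t s

/-! ### Basic properties of `H` -/

private lemma gamma_int_nonpos {n : ℤ} (hn : n ≤ 0) : Real.Gamma (n : ℝ) = 0 := by
  lift -n to ℕ using (by omega) with m hm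
  have e : (n : ℝ) = -(m : ℝ) := by
    have : n = -(m : ℤ) := by omega
    rw [this]; push_cast; ring
  rw [e]; exact Real.Gamma_neg_nat_eq_zero m

private lemma H_zero {μ : ℝ} {t a : ℤ} (h : t ≤ a) : H μ t a = 0 := by
  have e : (t : ℝ) - a = ((t - a : ℤ) : ℝ) := by push_cast; ring
  rw [H, e, gamma_int_nonpos (by omega : t - a ≤ 0), zero_mul, div_zero]

private lemma H_base {μ : ℝ} (hμ : -1 < μ) (a : ℤ) : H μ (a + 1) a = 1 := by
  have e : ((a + 1 : ℤ) : ℝ) - a = 1 := by push_cast; ring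
  rw [H, e, Real.Gamma_one, one_mul, add_comm 1 μ, div_self]
  exact (Real.Gamma_pos_of_pos (by linarith)).ne'

private lemma H_succ {μ : ℝ} (hμ : -1 < μ) {a t : ℤ} (h : a + 1 ≤ t) :
    H μ (t + 1) a = H μ t a * (((t : ℝ) - a + μ) / ((t : ℝ) - a)) := by
  have hx : (1 : ℝ) ≤ (t : ℝ) - a := by
    have : (a : ℝ) + 1 ≤ (t : ℝ) := by exact_mod_cast h
    linarith
  have hx0 : ((t : ℝ) - a) ≠ 0 := by linarith
  have hxμ : ((t : ℝ) - a + μ) ≠ 0 := ne_of_gt (by linarith)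
  have hg1 : Real.Gamma ((t : ℝ) - a) ≠ 0 := (Real.Gamma_pos_of_pos (by linarith)).ne'
  have hg2 : Real.Gamma (μ + 1) ≠ 0 := (Real.Gamma_pos_of_pos (by linarith)).ne'
  have e1 : ((t + 1 : ℤ) : ℝ) - a + μ = ((t : ℝ) - a + μ) + 1 := by push_cast; ring
  have e2 : ((t + 1 : ℤ) : ℝ) - a = ((t : ℝ) - a) + 1 := by push_cast; ring
  rw [H, H, e1, e2, Real.Gamma_add_one hxμ, Real.Gamma_add_one hx0]
  field_simp

private lemma H_shift (μ : ℝ) (t a c : ℤ) : H μ (t + c) (a + c) = H μ t a := by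
  have e1 : ((t + c : ℤ) : ℝ) - ((a + c : ℤ) : ℝ) = (t : ℝ) - a := by push_cast; ring
  rw [H, H, e1]

private lemma cast_ge {a t : ℤ} (h : a + 1 ≤ t) : (1 : ℝ) ≤ (t : ℝ) - a := by
  have : (a : ℝ) + 1 ≤ (t : ℝ) := by exact_mod_cast h
  linarith

private lemma H_pos {μ : ℝ} (hμ : -1 < μ) {a t : ℤ} (h : a + 1 ≤ t) : 0 < H μ t a := by
  refine Int.le_induction (motive := fun n _ => 0 < H μ n a) ?_ (fun t ht ih => ?_) t h
  · show 0 < H μ (a+1) a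
    rw [H_base hμ]; norm_num
  · show 0 < H μ (t+1) a
    have hx := cast_ge ht
    rw [H_succ hμ ht]
    exact mul_pos ih (div_pos (by linarith) (by linarith))

private lemma H_nonneg {μ : ℝ} (hμ : -1 < μ) (t a : ℤ) : 0 ≤ H μ t a := by
  rcases le_or_gt t a with h | h
  · rw [H_zero h]
  · exact (H_pos hμ (by omega)).le

private lemma H_lt_succ {μ : ℝ} (hμ : 0 < μ) {a t : ℤ} (h : a + 1 ≤ t) :
    H μ t a < H μ (t + 1) a := by
  have hx := cast_ge h
  have hp := H_pos (by linarith : (-1:ℝ) < μ) h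
  rw [H_succ (by linarith) h]
  have hr : 1 < ((t : ℝ) - a + μ) / ((t : ℝ) - a) :=
    (one_lt_div (by linarith)).mpr (by linarith)
  nlinarith

private lemma H_lt {μ : ℝ} (hμ : 0 < μ) {a t t' : ℤ} (h : a + 1 ≤ t) (htt : t < t') :
    H μ t a < H μ t' a := by
  have h' : t + 1 ≤ t' := htt
  refine Int.le_induction (motive := fun n _ => H μ t a < H μ n a) ?_ (fun t' ht' ih => ?_) t' h'
  · exact H_lt_succ hμ h
  · exact lt_trans ih (H_lt_succ hμ (by omega))

private lemma H_mono {μ : ℝ} (hμ : 0 < μ) {a t t' : ℤ} (h2 : t ≤ t') (h3 : a + 1 ≤ t') :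
    H μ t a ≤ H μ t' a := by
  rcases le_or_gt t a with h | h
  · rw [H_zero h]; exact (H_pos (by linarith) h3).le
  · rcases eq_or_lt_of_le h2 with he | hlt
    · rw [he]
    · exact (H_lt hμ (by omega) hlt).le

private lemma H_one_le {μ : ℝ} (hμ : 0 < μ) {a t : ℤ} (h : a + 1 ≤ t) : 1 ≤ H μ t a := by
  rw [← H_base (by linarith : (-1:ℝ) < μ) a]
  exact H_mono hμ h h

private lemma H_le_one {μ : ℝ} (hμ1 : -1 < μ) (hμ2 : μ < 0) {a t : ℤ} (h : a + 1 ≤ t) :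
    H μ t a ≤ 1 := by
  refine Int.le_induction (motive := fun n _ => H μ n a ≤ 1) ?_ (fun t ht ih => ?_) t h
  · show H μ (a+1) a ≤ 1
    rw [H_base hμ1]
  · show H μ (t+1) a ≤ 1
    have hx := cast_ge ht
    have hp := H_pos hμ1 ht
    rw [H_succ hμ1 ht]
    have hr1 : ((t : ℝ) - a + μ) / ((t : ℝ) - a) ≤ 1 :=
      div_le_one_of_le₀ (by linarith) (by linarith)
    have hr0 : 0 ≤ ((t : ℝ) - a + μ) / ((t : ℝ) - a) :=
      div_nonneg (by linarith) (by linarith)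
    nlinarith

/-! ### The Green's function bounds -/

private noncomputable def Om (ν : ℝ) (a b : ℤ) (α β γ δ : ℝ) : ℝ :=
  (1 / xiBVP ν a b α β γ δ) *
    (α * γ * H (ν - 1) b a * H (ν - 1) b a + α * δ * H (ν - 1) b a
      + (β - α) * γ * H (ν - 1) b a + (β - α) * δ)

section Bounds

variable {ν : ℝ} {a b : ℤ} {α β γ δ : ℝ}

private lemma Tb_le_Om (hν1 : 1 < ν) (hν2 : ν < 2) (hab : a + 1 ≤ b)
    (hα : 0 ≤ α) (hγ : 0 ≤ γ) (hδ : 0 ≤ δ) (hba : α ≤ β)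
    (hξ : 0 < xiBVP ν a b α β γ δ) :
    H (ν - 1) b a ≤ Om ν a b α β γ δ := by
  have hm1 : (0:ℝ) < ν - 1 := by linarith
  have hTb1 : 1 ≤ H (ν - 1) b a := H_one_le hm1 hab
  have hE1 : H (ν - 2) b a ≤ 1 := H_le_one (by linarith) (by linarith) hab
  have hE0 : 0 < H (ν - 2) b a := H_pos (by linarith) hab
  have key : H (ν - 1) b a * xiBVP ν a b α β γ δ ≤
      α * γ * H (ν - 1) b a * H (ν - 1) b a + α * δ * H (ν - 1) b a
        + (β - α) * γ * H (ν - 1) b a + (β - α) * δ := by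
    rw [xiBVP]
    nlinarith [mul_nonneg (mul_nonneg (mul_nonneg hα hδ) (by linarith : (0:ℝ) ≤ H (ν-1) b a))
        (by linarith : (0:ℝ) ≤ 1 - H (ν - 2) b a),
      mul_nonneg (by linarith : (0:ℝ) ≤ β - α) hδ]
  calc H (ν - 1) b a
      = (1 / xiBVP ν a b α β γ δ) * (H (ν - 1) b a * xiBVP ν a b α β γ δ) := by
        field_simp
    _ ≤ Om ν a b α β γ δ := by
        rw [Om]
        exact mul_le_mul_of_nonneg_left key (one_div_nonneg.mpr hξ.le)

private lemma Om_pos (hν1 : 1 < ν) (hν2 : ν < 2) (hab : a + 1 ≤ b)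
    (hα : 0 ≤ α) (hγ : 0 ≤ γ) (hδ : 0 ≤ δ) (hba : α ≤ β)
    (hξ : 0 < xiBVP ν a b α β γ δ) : 0 < Om ν a b α β γ δ := by
  have hTb1 : 1 ≤ H (ν - 1) b a := H_one_le (by linarith) hab
  linarith [Tb_le_Om hν1 hν2 hab hα hγ hδ hba hξ]

private lemma shiftF {x y : ℤ} (μ : ℝ) : H μ x (y - 1) = H μ (x + a - y + 1) a := by
  have h0 := H_shift μ (x + a - y + 1) a (y - 1 - a)
  rw [show x + a - y + 1 + (y - 1 - a) = x by ring, show a + (y - 1 - a) = y - 1 by ring] at h0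
  exact h0

private lemma uG_le (hν1 : 1 < ν) (hν2 : ν < 2) (hab : a + 1 ≤ b)
    (hα : 0 ≤ α) (hγ : 0 ≤ γ) (hδ : 0 ≤ δ) (hba : α ≤ β)
    (hξ : 0 < xiBVP ν a b α β γ δ) {t s : ℤ}
    (ht2 : t ≤ b) (hs1 : a + 1 ≤ s) (hs2 : s ≤ b) :
    uG ν a b α β γ δ t s ≤ Om ν a b α β γ δ := by
  have hm1 : (0:ℝ) < ν - 1 := by linarith
  have hT0 : 0 ≤ H (ν - 1) t a := H_nonneg (by linarith) t a
  have hTle : H (ν - 1) t a ≤ H (ν - 1) b a := H_mono hm1 ht2 hab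
  have hTb1 : 1 ≤ H (ν - 1) b a := H_one_le hm1 hab
  have eF : H (ν - 1) b (s - 1) = H (ν - 1) (b + a - s + 1) a := shiftF (ν - 1)
  have eE : H (ν - 2) b (s - 1) = H (ν - 2) (b + a - s + 1) a := shiftF (ν - 2)
  have hF1 : 1 ≤ H (ν - 1) b (s - 1) := by rw [eF]; exact H_one_le hm1 (by omega)
  have hFle : H (ν - 1) b (s - 1) ≤ H (ν - 1) b a := by
    rw [eF]; exact H_mono hm1 (by omega) hab
  have hE0 : 0 < H (ν - 2) b (s - 1) := by rw [eE]; exact H_pos (by linarith) (by omega)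
  have hE1 : H (ν - 2) b (s - 1) ≤ 1 := by
    rw [eE]; exact H_le_one (by linarith) (by linarith) (by omega)
  have k1 : α * γ * (H (ν - 1) t a * H (ν - 1) b (s - 1)) ≤
      α * γ * (H (ν - 1) b a * H (ν - 1) b a) :=
    mul_le_mul_of_nonneg_left
      (mul_le_mul hTle hFle (by linarith) (by linarith)) (mul_nonneg hα hγ)
  have k2 : α * δ * (H (ν - 1) t a * H (ν - 2) b (s - 1)) ≤ α * δ * H (ν - 1) b a :=
    mul_le_mul_of_nonneg_left (by nlinarith) (mul_nonneg hα hδ)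
  have k3 : (β - α) * γ * H (ν - 1) b (s - 1) ≤ (β - α) * γ * H (ν - 1) b a :=
    mul_le_mul_of_nonneg_left hFle (mul_nonneg (by linarith) hγ)
  have k4 : (β - α) * δ * H (ν - 2) b (s - 1) ≤ (β - α) * δ * 1 :=
    mul_le_mul_of_nonneg_left hE1 (mul_nonneg (by linarith) hδ)
  rw [uG, Om]
  exact mul_le_mul_of_nonneg_left (by nlinarith) (one_div_nonneg.mpr hξ.le)

private lemma uG_lt (hν1 : 1 < ν) (hν2 : ν < 2) (hab : a + 1 ≤ b)
    (hα : 0 ≤ α) (hβ : 0 ≤ β) (hγ : 0 ≤ γ) (hδ : 0 ≤ δ) (hba : α ≤ β)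
    (hξ : 0 < xiBVP ν a b α β γ δ) {t s : ℤ}
    (ht2 : t ≤ b - 1) (hs1 : a + 2 ≤ s) (hs2 : s ≤ b) :
    uG ν a b α β γ δ t s < Om ν a b α β γ δ := by
  have hm1 : (0:ℝ) < ν - 1 := by linarith
  have hT0 : 0 ≤ H (ν - 1) t a := H_nonneg (by linarith) t a
  have hTle : H (ν - 1) t a ≤ H (ν - 1) b a := H_mono hm1 (by omega) hab
  have hTb1 : 1 ≤ H (ν - 1) b a := H_one_le hm1 hab
  have hTlt : H (ν - 1) t a < H (ν - 1) b a := by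
    rcases le_or_gt t a with h | h
    · rw [H_zero h]; linarith [H_pos (show (-1:ℝ) < ν - 1 by linarith) hab]
    · exact H_lt hm1 (by omega) (by omega)
  have eF : H (ν - 1) b (s - 1) = H (ν - 1) (b + a - s + 1) a := shiftF (ν - 1)
  have eE : H (ν - 2) b (s - 1) = H (ν - 2) (b + a - s + 1) a := shiftF (ν - 2)
  have hF1 : 1 ≤ H (ν - 1) b (s - 1) := by rw [eF]; exact H_one_le hm1 (by omega)
  have hFle : H (ν - 1) b (s - 1) ≤ H (ν - 1) b a := by
    rw [eF]; exact H_mono hm1 (by omega) hab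
  have hFlt : H (ν - 1) b (s - 1) < H (ν - 1) b a := by
    rw [eF]; exact H_lt hm1 (by omega) (by omega)
  have hE0 : 0 < H (ν - 2) b (s - 1) := by rw [eE]; exact H_pos (by linarith) (by omega)
  have hE1 : H (ν - 2) b (s - 1) ≤ 1 := by
    rw [eE]; exact H_le_one (by linarith) (by linarith) (by omega)
  -- the four generic (non-strict) term bounds
  have k1 : α * γ * (H (ν - 1) t a * H (ν - 1) b (s - 1)) ≤
      α * γ * (H (ν - 1) b a * H (ν - 1) b a) :=
    mul_le_mul_of_nonneg_left
      (mul_le_mul hTle hFle (by linarith) (by linarith)) (mul_nonneg hα hγ)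
  have k2 : α * δ * (H (ν - 1) t a * H (ν - 2) b (s - 1)) ≤ α * δ * H (ν - 1) b a :=
    mul_le_mul_of_nonneg_left (by nlinarith) (mul_nonneg hα hδ)
  have k3 : (β - α) * γ * H (ν - 1) b (s - 1) ≤ (β - α) * γ * H (ν - 1) b a :=
    mul_le_mul_of_nonneg_left hFle (mul_nonneg (by linarith) hγ)
  have k4 : (β - α) * δ * H (ν - 2) b (s - 1) ≤ (β - α) * δ * 1 :=
    mul_le_mul_of_nonneg_left hE1 (mul_nonneg (by linarith) hδ)
  have main : α * γ * H (ν - 1) t a * H (ν - 1) b (s - 1)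
      + α * δ * H (ν - 1) t a * H (ν - 2) b (s - 1)
      + (β - α) * γ * H (ν - 1) b (s - 1)
      + (β - α) * δ * H (ν - 2) b (s - 1)
      < α * γ * H (ν - 1) b a * H (ν - 1) b a + α * δ * H (ν - 1) b a
      + (β - α) * γ * H (ν - 1) b a + (β - α) * δ := by
    rcases eq_or_lt_of_le hα with hα0 | hαpos
    · -- α = 0 : must have β*γ > 0, use strict F bound
      have hβγ : 0 < (β - α) * γ := by
        rcases eq_or_lt_of_le (mul_nonneg (by linarith : (0:ℝ) ≤ β - α) hγ) with h0 | h0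
        · exfalso
          rw [xiBVP, ← hα0] at hξ
          simp only [zero_mul] at hξ
          rw [← hα0] at h0
          simp only [sub_zero] at h0 hξ
          linarith
        · exact h0
      have s3 : (β - α) * γ * H (ν - 1) b (s - 1) < (β - α) * γ * H (ν - 1) b a :=
        mul_lt_mul_of_pos_left hFlt hβγ
      linarith
    · -- α > 0 : then γ > 0 or δ > 0, use strict T bound
      have hγδ : 0 < γ ∨ 0 < δ := by
        by_contra hcon
        push_neg at hcon
        have hγ0 : γ = 0 := le_antisymm hcon.1 hγ
        have hδ0 : δ = 0 := le_antisymm hcon.2 hδ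
        rw [xiBVP, hγ0, hδ0] at hξ
        simp at hξ
      rcases hγδ with hγpos | hδpos
      · have s1 : α * γ * (H (ν - 1) t a * H (ν - 1) b (s - 1)) <
            α * γ * (H (ν - 1) b a * H (ν - 1) b a) := by
          apply mul_lt_mul_of_pos_left _ (mul_pos hαpos hγpos)
          nlinarith
        linarith
      · have s2 : α * δ * (H (ν - 1) t a * H (ν - 2) b (s - 1)) < α * δ * H (ν - 1) b a := by
          apply mul_lt_mul_of_pos_left _ (mul_pos hαpos hδpos)
          nlinarith
        linarith
  rw [uG, Om]
  exact mul_lt_mul_of_pos_left main (one_div_pos.mpr hξ)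

private lemma uG_pos (hν1 : 1 < ν) (hν2 : ν < 2) (hab : a + 1 ≤ b)
    (hα : 0 ≤ α) (hγ : 0 ≤ γ) (hδ : 0 ≤ δ) (hba : α ≤ β)
    (hξ : 0 < xiBVP ν a b α β γ δ) {t s : ℤ}
    (ht1 : a + 1 ≤ t) (hs1 : a + 1 ≤ s) (hs2 : s ≤ b) :
    0 < uG ν a b α β γ δ t s := by
  have hm1 : (0:ℝ) < ν - 1 := by linarith
  have hT1 : 1 ≤ H (ν - 1) t a := H_one_le hm1 ht1
  have eF : H (ν - 1) b (s - 1) = H (ν - 1) (b + a - s + 1) a := shiftF (ν - 1)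
  have eE : H (ν - 2) b (s - 1) = H (ν - 2) (b + a - s + 1) a := shiftF (ν - 2)
  have hF1 : 1 ≤ H (ν - 1) b (s - 1) := by rw [eF]; exact H_one_le hm1 (by omega)
  have hE0 : 0 < H (ν - 2) b (s - 1) := by rw [eE]; exact H_pos (by linarith) (by omega)
  have hc : 0 < α * γ ∨ 0 < α * δ ∨ 0 < (β - α) * γ := by
    by_contra hcon
    push_neg at hcon
    obtain ⟨h1, h2, h3⟩ := hcon
    have e1 : α * γ = 0 := le_antisymm h1 (mul_nonneg hα hγ)
    have e2 : α * δ = 0 := le_antisymm h2 (mul_nonneg hα hδ)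
    have e3 : (β - α) * γ = 0 := le_antisymm h3 (mul_nonneg (by linarith) hγ)
    rw [xiBVP, e1, e2, e3] at hξ
    simp at hξ
  have hT0 : (0:ℝ) ≤ H (ν - 1) t a := by linarith
  have hF0 : (0:ℝ) ≤ H (ν - 1) b (s - 1) := by linarith
  have hE0' : (0:ℝ) ≤ H (ν - 2) b (s - 1) := hE0.le
  have n1 : 0 ≤ α * γ * H (ν - 1) t a * H (ν - 1) b (s - 1) :=
    mul_nonneg (mul_nonneg (mul_nonneg hα hγ) hT0) hF0
  have n2 : 0 ≤ α * δ * H (ν - 1) t a * H (ν - 2) b (s - 1) :=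
    mul_nonneg (mul_nonneg (mul_nonneg hα hδ) hT0) hE0'
  have n3 : 0 ≤ (β - α) * γ * H (ν - 1) b (s - 1) :=
    mul_nonneg (mul_nonneg (by linarith) hγ) hF0
  have n4 : 0 ≤ (β - α) * δ * H (ν - 2) b (s - 1) :=
    mul_nonneg (mul_nonneg (by linarith) hδ) hE0'
  have hnum : 0 < α * γ * H (ν - 1) t a * H (ν - 1) b (s - 1)
      + α * δ * H (ν - 1) t a * H (ν - 2) b (s - 1)
      + (β - α) * γ * H (ν - 1) b (s - 1)
      + (β - α) * δ * H (ν - 2) b (s - 1) := by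
    rcases hc with h | h | h
    · have := mul_pos (mul_pos h (show (0:ℝ) < H (ν - 1) t a by linarith))
        (show (0:ℝ) < H (ν - 1) b (s - 1) by linarith)
      linarith
    · have := mul_pos (mul_pos h (show (0:ℝ) < H (ν - 1) t a by linarith)) hE0
      linarith
    · have := mul_pos h (show (0:ℝ) < H (ν - 1) b (s - 1) by linarith)
      linarith
  rw [uG]
  exact mul_pos (one_div_pos.mpr hξ) hnum

private lemma GG_abs_lt (hν1 : 1 < ν) (hν2 : ν < 2) (hab : a + 1 ≤ b)
    (hα : 0 ≤ α) (hβ : 0 ≤ β) (hγ : 0 ≤ γ) (hδ : 0 ≤ δ) (hba : α ≤ β)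
    (hξ : 0 < xiBVP ν a b α β γ δ) {t s : ℤ}
    (ht1 : a + 1 ≤ t) (ht2 : t ≤ b) (hs1 : a + 1 ≤ s) (hs2 : s ≤ b) :
    |GG ν a b α β γ δ t s| < Om ν a b α β γ δ := by
  have hm1 : (0:ℝ) < ν - 1 := by linarith
  have hOm := Om_pos hν1 hν2 hab hα hγ hδ hba hξ
  rw [GG]
  split_ifs with h
  · -- t ≤ s - 1 : uG branch
    rw [abs_lt]
    constructor
    · have h0 : 0 < uG ν a b α β γ δ t s :=
        uG_pos hν1 hν2 hab hα hγ hδ hba hξ ht1 hs1 hs2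
      linarith
    · exact uG_lt hν1 hν2 hab hα hβ hγ hδ hba hξ (by omega) (by omega) hs2
  · -- s ≤ t : vG branch
    have hst : s ≤ t := by omega
    have eH : H (ν - 1) t (s - 1) = H (ν - 1) (t + a - s + 1) a := shiftF (ν - 1)
    have hH0 : 0 < H (ν - 1) t (s - 1) := by
      rw [eH]; exact H_pos (by linarith) (by omega)
    have hHle : H (ν - 1) t (s - 1) ≤ H (ν - 1) b a := by
      rw [eH]; exact H_mono hm1 (by omega) hab
    have hTbOm := Tb_le_Om hν1 hν2 hab hα hγ hδ hba hξ
    have hu0 : 0 < uG ν a b α β γ δ t s :=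
      uG_pos hν1 hν2 hab hα hγ hδ hba hξ ht1 hs1 hs2
    have hule : uG ν a b α β γ δ t s ≤ Om ν a b α β γ δ :=
      uG_le hν1 hν2 hab hα hγ hδ hba hξ ht2 hs1 hs2
    rw [vG, abs_lt]
    constructor
    · linarith
    · linarith

end Bounds

theorem lyapunov_inequality (ν : ℝ) (hν1 : 1 < ν) (hν2 : ν < 2)
    (a b : ℤ) (hab : a + 1 ≤ b)
    (α β γ δ : ℝ) (hα : 0 ≤ α) (hβ : 0 ≤ β) (hγ : 0 ≤ γ) (hδ : 0 ≤ δ)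
    (hba : α ≤ β) (hξ : 0 < xiBVP ν a b α β γ δ)
    (q u : ℤ → ℝ)
    (hnontriv : ∃ t ∈ Finset.Icc a b, u t ≠ 0)
    (hfix : ∀ t ∈ Finset.Icc a b,
      u t = ∑ s ∈ Finset.Icc (a + 1) b, GG ν a b α β γ δ t s * q s * u s) :
    ∑ s ∈ Finset.Icc (a + 1) b, |q s| >
      1 / ((1 / xiBVP ν a b α β γ δ) *
        (α * γ * H (ν - 1) b a * H (ν - 1) b a + α * δ * H (ν - 1) b a
          + (β - α) * γ * H (ν - 1) b a + (β - α) * δ)) := by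
  have hOm : 0 < Om ν a b α β γ δ := Om_pos hν1 hν2 hab hα hγ hδ hba hξ
  have hSne : (Finset.Icc (a + 1) b).Nonempty := Finset.nonempty_Icc.mpr hab
  obtain ⟨t0, ht0S, hmax⟩ := (Finset.Icc (a + 1) b).exists_max_image (fun t => |u t|) hSne
  have ht0 : a + 1 ≤ t0 ∧ t0 ≤ b := Finset.mem_Icc.mp ht0S
  have ht0ab : t0 ∈ Finset.Icc a b := Finset.mem_Icc.mpr ⟨by omega, ht0.2⟩
  have hM : 0 < |u t0| := by
    rcases lt_or_ge 0 (|u t0|) with h | h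
    · exact h
    · exfalso
      have hz : ∀ t ∈ Finset.Icc (a + 1) b, u t = 0 := fun t htS =>
        abs_eq_zero.mp (le_antisymm (le_trans (hmax t htS) h) (abs_nonneg _))
      obtain ⟨t1, ht1, hu1⟩ := hnontriv
      apply hu1
      rw [hfix t1 ht1]
      refine Finset.sum_eq_zero fun s hs => ?_
      rw [hz s hs, mul_zero]
  have hqex : ∃ s ∈ Finset.Icc (a + 1) b, q s ≠ 0 := by
    by_contra hc
    push_neg at hc
    have hz : u t0 = 0 := by
      rw [hfix t0 ht0ab]
      refine Finset.sum_eq_zero fun s hs => ?_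
      rw [hc s hs, mul_zero, zero_mul]
    rw [hz] at hM
    simp at hM
  obtain ⟨s1, hs1S, hq1⟩ := hqex
  have hGb : ∀ s ∈ Finset.Icc (a + 1) b, |GG ν a b α β γ δ t0 s| < Om ν a b α β γ δ := by
    intro s hs
    have hsm := Finset.mem_Icc.mp hs
    exact GG_abs_lt hν1 hν2 hab hα hβ hγ hδ hba hξ ht0.1 ht0.2 hsm.1 hsm.2
  have step1 : |u t0| ≤ ∑ s ∈ Finset.Icc (a + 1) b,
      |GG ν a b α β γ δ t0 s| * |q s| * |u s| := by
    rw [hfix t0 ht0ab]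
    refine le_trans (Finset.abs_sum_le_sum_abs _ _) (le_of_eq ?_)
    refine Finset.sum_congr rfl fun s hs => ?_
    rw [abs_mul, abs_mul]
  have step2 : ∑ s ∈ Finset.Icc (a + 1) b, |GG ν a b α β γ δ t0 s| * |q s| * |u s|
      < ∑ s ∈ Finset.Icc (a + 1) b, Om ν a b α β γ δ * |q s| * |u t0| := by
    apply Finset.sum_lt_sum
    · intro s hs
      calc |GG ν a b α β γ δ t0 s| * |q s| * |u s|
          ≤ |GG ν a b α β γ δ t0 s| * |q s| * |u t0| :=
            mul_le_mul_of_nonneg_left (hmax s hs) (mul_nonneg (abs_nonneg _) (abs_nonneg _))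
        _ ≤ Om ν a b α β γ δ * |q s| * |u t0| :=
            mul_le_mul_of_nonneg_right
              (mul_le_mul_of_nonneg_right (hGb s hs).le (abs_nonneg _)) (abs_nonneg _)
    · refine ⟨s1, hs1S, ?_⟩
      calc |GG ν a b α β γ δ t0 s1| * |q s1| * |u s1|
          ≤ |GG ν a b α β γ δ t0 s1| * |q s1| * |u t0| :=
            mul_le_mul_of_nonneg_left (hmax s1 hs1S) (mul_nonneg (abs_nonneg _) (abs_nonneg _))
        _ < Om ν a b α β γ δ * |q s1| * |u t0| :=
            mul_lt_mul_of_pos_right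
              (mul_lt_mul_of_pos_right (hGb s1 hs1S) (abs_pos.mpr hq1)) hM
  have step3 : ∑ s ∈ Finset.Icc (a + 1) b, Om ν a b α β γ δ * |q s| * |u t0|
      = (Om ν a b α β γ δ * |u t0|) * ∑ s ∈ Finset.Icc (a + 1) b, |q s| := by
    rw [Finset.mul_sum]
    exact Finset.sum_congr rfl fun s _ => by ring
  have h4 : |u t0| < (Om ν a b α β γ δ * |u t0|) * ∑ s ∈ Finset.Icc (a + 1) b, |q s| := by
    rw [← step3]; exact lt_of_le_of_lt step1 step2
  have final : 1 < Om ν a b α β γ δ * ∑ s ∈ Finset.Icc (a + 1) b, |q s| := by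
    nlinarith [h4, hM]
  show ∑ s ∈ Finset.Icc (a + 1) b, |q s| > 1 / Om ν a b α β γ δ
  rw [gt_iff_lt, div_lt_iff₀ hOm]
  nlinarith [final]
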